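/- arXiv:1609.01766 — 2 statements merged into one kernel-verified Lean document; each statement's English description precedes it below -/
import Mathlib

section
/- For 0 ≤ n ≤ r put w_n^+ = u_{−n−1/2} + p·u_{n+1/2} and w_n^− = u_{−n−1/2} − p^{−1}·u_{n+1/2}. Then for all 1 ≤ i ≤ r and 0 ≤ n ≤ r: t(w_n^+) = ((p·q^{δ_{n,0}} − p^{−1}·q^{−δ_{n,0}})/(q − q^{−1}))·w_n^+; f_i(w_n^+) = δ_{i,n+1}·w_{n+1}^+; e_i(w_n^+) = δ_{i,n}·w_{n−1}^+; t(w_n^−) = ((p·q^{−δ_{n,0}} − p^{−1}·q^{δ_{n,0}})/(q − q^{−1}))·w_n^−; f_i(w_n^−) = δ_{i,n+1}·w_{n+1}^−; e_i(w_n^−) = δ_{i,n}·w_{n−1}^−. Consequently V^+ = span{w_n^+} and V^− = span{w_n^−} are each invariant under all of t, e_i, f_i, k_i, k_i^{−1}, and V = V^+ ⊕ V^− as modules for the algebra generated by these operators. -/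
/-!
Write `a_n = u_{-n-1/2}`, `b_n = u_{n+1/2}` and, for any scalar `c`, `w_n(c) = a_n + c b_n`, so that
`w_n⁺ = w_n(p)` and `w_n⁻ = w_n(-p⁻¹)`. For `i ≥ 1` the operators `e_i, f_i` shift the `a`'s and
the `b`'s along the same chain `n ↦ n ∓ 1`, and `k_i` scales `a_n` and `b_n` by the same power of
`q`, so they act on the family `w_n(c)` for every `c`. The operator `t` is the scalar
`(p - p⁻¹)/(q - q⁻¹)` on `a_n, b_n` for `n ≥ 1` and a `2 × 2` block on `a_0, b_0`; `w_0(c)` is an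
eigenvector of that block exactly when `c² = 1 + c (p - p⁻¹)`, i.e. `c = p` or `c = -p⁻¹`.
Since `p ≠ -p⁻¹`, the `a_n, b_n` are recovered from `w_n(p), w_n(-p⁻¹)`, and the relation
`x(b_n) = c · x(a_n)`, valid on the span of the `w(c)`, shows that the two spans meet in `0`.
-/

open scoped BigOperators

attribute [local instance] Classical.propDecidable

noncomputable section

/-- The field `ℚ(p,q)` of rational functions in two indeterminates over `ℚ`. -/
abbrev K2 : Type := FractionRing (MvPolynomial (Fin 2) ℚ)

/-- The indeterminate `p`. -/
noncomputable def pp : K2 := algebraMap (MvPolynomial (Fin 2) ℚ) K2 (MvPolynomial.X 0)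

/-- The indeterminate `q`. -/
noncomputable def qq : K2 := algebraMap (MvPolynomial (Fin 2) ℚ) K2 (MvPolynomial.X 1)

/-- The index set `I = {-r-1/2, -r+1/2, ..., r+1/2}` of half-integers, as a subtype of `ℚ`. -/
def HIdx (r : ℕ) : Type := {a : ℚ // ∃ k : ℤ, -(r : ℤ) - 1 ≤ k ∧ k ≤ r ∧ a = (k : ℚ) + 1/2}

instance (r : ℕ) : DecidableEq (HIdx r) := fun a b =>
  decidable_of_iff (a.1 = b.1) Subtype.ext_iff.symm

/-- Negation on the index set. -/
def HIdx.neg {r : ℕ} (a : HIdx r) : HIdx r :=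
  ⟨-a.1, by
    obtain ⟨k, h1, h2, h3⟩ := a.2
    exact ⟨-k - 1, by omega, by omega, by rw [h3]; push_cast; ring⟩⟩

/-- Interpret a rational number as an element of the index set (junk value if out of range). -/
def toHI (r : ℕ) (a : ℚ) : HIdx r :=
  if h : ∃ k : ℤ, -(r : ℤ) - 1 ≤ k ∧ k ≤ r ∧ a = (k : ℚ) + 1/2 then ⟨a, h⟩
  else ⟨-(1/2 : ℚ), ⟨-1, by omega, by omega, by norm_num⟩⟩


/-- The natural representation `V`, the free `K2`-module on the index set `I`. -/
abbrev V1 (r : ℕ) : Type := HIdx r →₀ K2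

/-- The basis vector `u_a` of `V`. -/
noncomputable def uv {r : ℕ} (a : HIdx r) : V1 r := Finsupp.single a 1

/-- `u_a` for a rational label. -/
noncomputable def uvq (r : ℕ) (a : ℚ) : V1 r := uv (toHI r a)

/-- `K_i`-weight of the basis vector `u_a`: `K_i u_a = q ^ kexp i a • u_a`. -/
def kexp (i a : ℚ) : ℤ :=
  (if a = i - 1/2 then 1 else 0) - (if a = i + 1/2 then 1 else 0)

/-- The operator `E_i` on `V`: `E_i u_a = δ_{a, i+1/2} u_{i-1/2}`. -/
noncomputable def E1 (r : ℕ) (i : ℚ) : Module.End K2 (V1 r) :=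
  Finsupp.lift (V1 r) K2 (HIdx r) (fun a => if a.1 = i + 1/2 then uvq r (i - 1/2) else 0)

/-- The operator `F_i` on `V`: `F_i u_a = δ_{a, i-1/2} u_{i+1/2}`. -/
noncomputable def F1 (r : ℕ) (i : ℚ) : Module.End K2 (V1 r) :=
  Finsupp.lift (V1 r) K2 (HIdx r) (fun a => if a.1 = i - 1/2 then uvq r (i + 1/2) else 0)

/-- The operator `K_i` on `V`. -/
noncomputable def K1 (r : ℕ) (i : ℚ) : Module.End K2 (V1 r) :=
  Finsupp.lift (V1 r) K2 (HIdx r) (fun a => (qq ^ kexp i a.1 : K2) • uv a)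

/-- The operator `K_i⁻¹` on `V`. -/
noncomputable def K1inv (r : ℕ) (i : ℚ) : Module.End K2 (V1 r) :=
  Finsupp.lift (V1 r) K2 (HIdx r) (fun a => (qq ^ (-(kexp i a.1)) : K2) • uv a)

/-- The coideal operator `t = E_0 + q F_0 K_0⁻¹ + ((p - p⁻¹)/(q - q⁻¹)) K_0⁻¹` on `V`. -/
noncomputable def t1 (r : ℕ) : Module.End K2 (V1 r) :=
  E1 r 0 + qq • (F1 r 0 * K1inv r 0) + ((pp - pp⁻¹) / (qq - qq⁻¹)) • K1inv r 0

/-- The coideal operator `e_i = E_i + F_{-i} K_i⁻¹` on `V`. -/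
noncomputable def e1 (r : ℕ) (i : ℚ) : Module.End K2 (V1 r) :=
  E1 r i + F1 r (-i) * K1inv r i

/-- The coideal operator `f_i = E_{-i} + K_{-i}⁻¹ F_i` on `V`. -/
noncomputable def f1 (r : ℕ) (i : ℚ) : Module.End K2 (V1 r) :=
  E1 r (-i) + K1inv r (-i) * F1 r i

/-- The coideal operator `k_i = K_i K_{-i}⁻¹` on `V`. -/
noncomputable def k1 (r : ℕ) (i : ℚ) : Module.End K2 (V1 r) :=
  K1 r i * K1inv r (-i)

/-- The inverse `k_i⁻¹ = K_i⁻¹ K_{-i}` on `V`. -/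
noncomputable def k1inv (r : ℕ) (i : ℚ) : Module.End K2 (V1 r) :=
  K1inv r i * K1 r (-i)

/-- `w_n⁺ = u_{-n-1/2} + p u_{n+1/2}`. -/
noncomputable def wplus (r : ℕ) (n : ℕ) : V1 r :=
  uvq r (-(n : ℚ) - 1/2) + pp • uvq r ((n : ℚ) + 1/2)

/-- `w_n⁻ = u_{-n-1/2} - p⁻¹ u_{n+1/2}`. -/
noncomputable def wminus (r : ℕ) (n : ℕ) : V1 r :=
  uvq r (-(n : ℚ) - 1/2) - pp⁻¹ • uvq r ((n : ℚ) + 1/2)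

section Labels

variable {r n i : ℕ}

lemma toHI_val {a : ℚ} (h : ∃ k : ℤ, -(r : ℤ) - 1 ≤ k ∧ k ≤ r ∧ a = (k : ℚ) + 1/2) :
    (toHI r a).1 = a := by
  rw [show toHI r a = ⟨a, h⟩ from dif_pos h]

lemma toHI_neg_val (hn : n ≤ r) : (toHI r (-(n : ℚ) - 1/2)).1 = -(n : ℚ) - 1/2 :=
  toHI_val ⟨-n - 1, by omega, by omega, by push_cast; ring⟩

lemma toHI_pos_val (hn : n ≤ r) : (toHI r ((n : ℚ) + 1/2)).1 = (n : ℚ) + 1/2 :=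
  toHI_val ⟨n, by omega, by omega, by push_cast; ring⟩

lemma toHI_neg_half_val : (toHI r (-(1/2))).1 = -(1/2) :=
  toHI_val ⟨-1, by omega, by omega, by norm_num⟩

lemma toHI_half_val : (toHI r (1/2)).1 = 1/2 :=
  toHI_val ⟨0, by omega, by omega, by norm_num⟩

lemma HIdx.exists_eq_toHI (a : HIdx r) :
    ∃ n ≤ r, a = toHI r (-(n : ℚ) - 1/2) ∨ a = toHI r ((n : ℚ) + 1/2) := by
  obtain ⟨k, hk₁, hk₂, hk⟩ := a.2
  rcases le_or_gt 0 k with hk₀ | hk₀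
  · refine ⟨k.toNat, by omega, Or.inr (Subtype.ext ?_)⟩
    rw [toHI_pos_val (by omega), hk, ← Int.cast_natCast, Int.toNat_of_nonneg hk₀]
  · refine ⟨(-k - 1).toNat, by omega, Or.inl (Subtype.ext ?_)⟩
    rw [toHI_neg_val (by omega), hk, ← Int.cast_natCast, Int.toNat_of_nonneg (by omega)]
    push_cast
    ring

lemma pos_label_eq_pos_label : (n : ℚ) + 1/2 = i + 1/2 ↔ n = i := by
  simp

@[simp] lemma pos_label_eq_pos_label_sub_one : (n : ℚ) + 1/2 = i - 1/2 ↔ i = n + 1 := by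
  constructor
  · intro h; exact_mod_cast (by linarith : (i : ℚ) = n + 1)
  · rintro rfl; push_cast; ring

@[simp] lemma pos_label_ne_neg_label : (n : ℚ) + 1/2 = -i - 1/2 ↔ False :=
  iff_false_intro fun h => by linarith [n.cast_nonneg (α := ℚ), i.cast_nonneg (α := ℚ)]

@[simp] lemma pos_label_eq_neg_label_add_one : (n : ℚ) + 1/2 = -i + 1/2 ↔ n = 0 ∧ i = 0 := by
  constructor
  · intro h
    have : n + i = 0 := by exact_mod_cast (by push_cast; linarith : ((n + i : ℕ) : ℚ) = 0)
    omega
  · rintro ⟨rfl, rfl⟩; simp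

@[simp] lemma neg_label_ne_pos_label : -(n : ℚ) - 1/2 = i + 1/2 ↔ False :=
  iff_false_intro fun h => by linarith [n.cast_nonneg (α := ℚ), i.cast_nonneg (α := ℚ)]

@[simp] lemma neg_label_eq_pos_label_sub_one : -(n : ℚ) - 1/2 = i - 1/2 ↔ n = 0 ∧ i = 0 := by
  constructor
  · intro h
    have : n + i = 0 := by exact_mod_cast (by push_cast; linarith : ((n + i : ℕ) : ℚ) = 0)
    omega
  · rintro ⟨rfl, rfl⟩; simp

@[simp] lemma neg_label_eq_neg_label_add_one : -(n : ℚ) - 1/2 = -i + 1/2 ↔ i = n + 1 := by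
  constructor
  · intro h; exact_mod_cast (by linarith : (i : ℚ) = n + 1)
  · rintro rfl; push_cast; ring

end Labels

section Indeterminates

lemma algebraMap_ne_zero_of_eval_ne_zero {f : MvPolynomial (Fin 2) ℚ} (x : Fin 2 → ℚ)
    (h : MvPolynomial.eval x f ≠ 0) : algebraMap (MvPolynomial (Fin 2) ℚ) K2 f ≠ 0 := by
  rw [ne_eq, IsFractionRing.to_map_eq_zero_iff]
  rintro rfl
  exact h (map_zero _)

lemma pp_ne_zero : pp ≠ 0 :=
  algebraMap_ne_zero_of_eval_ne_zero 1 (by simp)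

lemma qq_ne_zero : qq ≠ 0 :=
  algebraMap_ne_zero_of_eval_ne_zero 1 (by simp)

lemma qq_sub_inv_ne_zero : qq - qq⁻¹ ≠ 0 := by
  have h : qq ^ 2 - 1 ≠ 0 := by
    rw [show qq ^ 2 - 1 = algebraMap (MvPolynomial (Fin 2) ℚ) K2 (.X 1 ^ 2 - 1) by simp [qq]]
    exact algebraMap_ne_zero_of_eval_ne_zero 2 (by norm_num)
  rw [show qq - qq⁻¹ = (qq ^ 2 - 1) / qq by field_simp [qq_ne_zero]]
  exact div_ne_zero h qq_ne_zero

lemma pp_ne_neg_inv : pp ≠ -pp⁻¹ := by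
  have h : pp ^ 2 + 1 ≠ 0 := by
    rw [show pp ^ 2 + 1 = algebraMap (MvPolynomial (Fin 2) ℚ) K2 (.X 0 ^ 2 + 1) by simp [pp]]
    exact algebraMap_ne_zero_of_eval_ne_zero 0 (by simp)
  rw [ne_eq, eq_neg_iff_add_eq_zero, show pp + pp⁻¹ = (pp ^ 2 + 1) / pp by field_simp [pp_ne_zero]]
  exact div_ne_zero h pp_ne_zero

end Indeterminates

section Operators

variable {r : ℕ} {a : ℚ}

lemma lift_uvq (g : HIdx r → V1 r) :
    Finsupp.lift (V1 r) K2 (HIdx r) g (uvq r a) = g (toHI r a) := by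
  simp [uvq, uv]

lemma E1_uvq (i : ℚ) (ha : (toHI r a).1 = a) :
    E1 r i (uvq r a) = if a = i + 1/2 then uvq r (i - 1/2) else 0 := by
  rw [E1, lift_uvq, ha]

lemma F1_uvq (i : ℚ) (ha : (toHI r a).1 = a) :
    F1 r i (uvq r a) = if a = i - 1/2 then uvq r (i + 1/2) else 0 := by
  rw [F1, lift_uvq, ha]

lemma K1_uvq (i : ℚ) (ha : (toHI r a).1 = a) :
    K1 r i (uvq r a) = (qq ^ kexp i a) • uvq r a := by
  rw [K1, lift_uvq, ha]; rfl

lemma K1inv_uvq (i : ℚ) (ha : (toHI r a).1 = a) :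
    K1inv r i (uvq r a) = (qq ^ (-kexp i a)) • uvq r a := by
  rw [K1inv, lift_uvq, ha]; rfl

lemma t1_uvq_neg_half :
    t1 r (uvq r (-(1/2)))
      = ((pp - pp⁻¹) / (qq - qq⁻¹) * qq⁻¹) • uvq r (-(1/2)) + (1 : K2) • uvq r (1/2) := by
  norm_num [t1, E1_uvq _ toHI_neg_half_val, F1_uvq _ toHI_neg_half_val,
    K1inv_uvq _ toHI_neg_half_val, kexp, mul_smul, -one_div]
  rw [smul_inv_smul₀ qq_ne_zero, add_comm]

lemma t1_uvq_half :
    t1 r (uvq r (1/2))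
      = (1 : K2) • uvq r (-(1/2)) + ((pp - pp⁻¹) / (qq - qq⁻¹) * qq) • uvq r (1/2) := by
  norm_num [t1, E1_uvq _ toHI_half_val, F1_uvq _ toHI_half_val,
    K1inv_uvq _ toHI_half_val, kexp, mul_smul, -one_div]

end Operators

def wvec (r : ℕ) (c : K2) (n : ℕ) : V1 r := uvq r (-(n : ℚ) - 1/2) + c • uvq r ((n : ℚ) + 1/2)

section Action

variable {r i n : ℕ} (c : K2)

lemma e1_wvec (hi : 1 ≤ i) (hn : n ≤ r) :
    e1 r i (wvec r c n) = if i = n then wvec r c (n - 1) else 0 := by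
  have hi0 : i ≠ 0 := by omega
  conv_lhs => simp [e1, wvec, E1_uvq _ (toHI_neg_val hn), E1_uvq _ (toHI_pos_val hn),
    F1_uvq _ (toHI_neg_val hn), F1_uvq _ (toHI_pos_val hn),
    K1inv_uvq _ (toHI_neg_val hn), K1inv_uvq _ (toHI_pos_val hn), kexp, hi0, -one_div]
  obtain rfl | hne := eq_or_ne i n
  · simp only [if_true, wvec, Nat.cast_pred hi, add_comm (c • _)]
    ring_nf
  · simp [hne, hne.symm]

lemma f1_wvec (hi : 1 ≤ i) (hir : i ≤ r) (hn : n ≤ r) :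
    f1 r i (wvec r c n) = if i = n + 1 then wvec r c (n + 1) else 0 := by
  have hi0 : i ≠ 0 := by omega
  conv_lhs => simp [f1, wvec, E1_uvq _ (toHI_neg_val hn), E1_uvq _ (toHI_pos_val hn),
    F1_uvq _ (toHI_neg_val hn), F1_uvq _ (toHI_pos_val hn), apply_ite (K1inv r (-(i : ℚ))),
    K1inv_uvq _ (toHI_pos_val hir), kexp, hi0, -one_div]
  split_ifs with h
  · subst h; rfl
  · simp

lemma k1_wvec (hi : 1 ≤ i) (hn : n ≤ r) :
    k1 r i (wvec r c n)
      = qq ^ ((if i = n + 1 then 1 else 0) - (if n = i then 1 else 0) : ℤ) • wvec r c n := by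
  have hi0 : i ≠ 0 := by omega
  simp [k1, wvec, K1_uvq _ (toHI_neg_val hn), K1_uvq _ (toHI_pos_val hn),
    K1inv_uvq _ (toHI_neg_val hn), K1inv_uvq _ (toHI_pos_val hn), kexp, hi0, -one_div]
  exact smul_comm _ _ _

lemma k1inv_wvec (hi : 1 ≤ i) (hn : n ≤ r) :
    k1inv r i (wvec r c n)
      = qq ^ (-((if i = n + 1 then 1 else 0) - (if n = i then 1 else 0)) : ℤ) • wvec r c n := by
  have hi0 : i ≠ 0 := by omega
  simp [k1inv, wvec, K1_uvq _ (toHI_neg_val hn), K1_uvq _ (toHI_pos_val hn),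
    K1inv_uvq _ (toHI_neg_val hn), K1inv_uvq _ (toHI_pos_val hn), kexp, hi0, -one_div]
  exact smul_comm _ _ _

lemma t1_wvec_of_ne_zero (hn0 : n ≠ 0) (hn : n ≤ r) :
    t1 r (wvec r c n) = ((pp - pp⁻¹) / (qq - qq⁻¹)) • wvec r c n := by
  simp only [t1]
  -- read the index `0` of `E_0, F_0, K_0` as `((0 : ℕ) : ℚ)`, so that the label lemmas apply
  rw [← Nat.cast_zero (R := ℚ)]
  simp only [LinearMap.add_apply, LinearMap.smul_apply, Module.End.mul_apply, wvec, map_add,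
    map_smul, E1_uvq _ (toHI_neg_val hn), E1_uvq _ (toHI_pos_val hn),
    F1_uvq _ (toHI_neg_val hn), F1_uvq _ (toHI_pos_val hn),
    K1inv_uvq _ (toHI_neg_val hn), K1inv_uvq _ (toHI_pos_val hn), kexp, pos_label_eq_pos_label,
    pos_label_eq_pos_label_sub_one, neg_label_ne_pos_label, neg_label_eq_pos_label_sub_one, hn0,
    Nat.zero_ne_add_one, false_and, if_false, sub_zero, neg_zero, zpow_zero, one_smul, smul_zero,
    add_zero, zero_add]
  rw [smul_add, smul_comm c]

end Action

lemma Module.End.apply_add_smul_eq_smul {R M : Type*} [CommRing R] [AddCommGroup M] [Module R M]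
    (T : Module.End R M) {a b : M} {α β γ δ c : R}
    (ha : T a = α • a + β • b) (hb : T b = γ • a + δ • b) (hc : β + c * δ = c * (α + c * γ)) :
    T (a + c • b) = (α + c * γ) • (a + c • b) := by
  rw [map_add, map_smul, ha, hb]
  linear_combination (norm := module) hc • b

section Eigen

variable {r n : ℕ} (c : K2)

lemma t1_coeff_mul_qq_sub_inv : (pp - pp⁻¹) / (qq - qq⁻¹) * (qq - qq⁻¹) = pp - pp⁻¹ :=
  div_mul_cancel₀ _ qq_sub_inv_ne_zero

lemma t1_wvec_zero (hc : c ^ 2 = 1 + c * (pp - pp⁻¹)) :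
    t1 r (wvec r c 0) = ((pp - pp⁻¹) / (qq - qq⁻¹) * qq⁻¹ + c) • wvec r c 0 := by
  have hw : wvec r c 0 = uvq r (-(1/2)) + c • uvq r (1/2) := by norm_num [wvec, -one_div]
  rw [hw, (t1 r).apply_add_smul_eq_smul t1_uvq_neg_half t1_uvq_half
    (by linear_combination -hc + c * t1_coeff_mul_qq_sub_inv), mul_one]

lemma t1_wvec_pp (hn : n ≤ r) :
    t1 r (wvec r pp n)
      = ((pp * qq ^ (if n = 0 then (1:ℤ) else 0) - pp⁻¹ * qq ^ (-(if n = 0 then (1:ℤ) else 0)))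
          / (qq - qq⁻¹)) • wvec r pp n := by
  rcases eq_or_ne n 0 with rfl | hn0
  · rw [t1_wvec_zero pp (by linear_combination mul_inv_cancel₀ pp_ne_zero)]
    congr 1
    rw [if_pos rfl, zpow_neg, zpow_one, eq_div_iff qq_sub_inv_ne_zero]
    linear_combination qq⁻¹ * t1_coeff_mul_qq_sub_inv
  · rw [t1_wvec_of_ne_zero pp hn0 hn]
    simp [hn0]

lemma t1_wvec_neg_pp_inv (hn : n ≤ r) :
    t1 r (wvec r (-pp⁻¹) n)
      = ((pp * qq ^ (-(if n = 0 then (1:ℤ) else 0)) - pp⁻¹ * qq ^ (if n = 0 then (1:ℤ) else 0))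
          / (qq - qq⁻¹)) • wvec r (-pp⁻¹) n := by
  rcases eq_or_ne n 0 with rfl | hn0
  · rw [t1_wvec_zero (-pp⁻¹) (by linear_combination inv_mul_cancel₀ pp_ne_zero)]
    congr 1
    rw [if_pos rfl, zpow_neg, zpow_one, eq_div_iff qq_sub_inv_ne_zero]
    linear_combination qq⁻¹ * t1_coeff_mul_qq_sub_inv
  · rw [t1_wvec_of_ne_zero (-pp⁻¹) hn0 hn]
    simp [hn0]

end Eigen

lemma Submodule.apply_mem_span_of_forall_apply_mem_span {R M : Type*} [Semiring R]
    [AddCommMonoid M] [Module R M] {T : M →ₗ[R] M} {S : Set M}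
    (h : ∀ y ∈ S, T y ∈ span R S) {x : M} (hx : x ∈ span R S) : T x ∈ span R S :=
  (span_le (p := (span R S).comap T)).mpr h hx

def wspan (r : ℕ) (c : K2) : Submodule K2 (V1 r) :=
  Submodule.span K2 {y | ∃ n : ℕ, n ≤ r ∧ y = wvec r c n}

section Decomposition

variable {r n : ℕ} {c c' : K2}

lemma wvec_mem_wspan (hn : n ≤ r) : wvec r c n ∈ wspan r c :=
  Submodule.subset_span ⟨n, hn, rfl⟩

lemma wspan_invariant (ht : ∀ n ≤ r, ∃ μ : K2, t1 r (wvec r c n) = μ • wvec r c n) :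
    ∀ x ∈ wspan r c, t1 r x ∈ wspan r c ∧
      ∀ i : ℕ, 1 ≤ i → i ≤ r →
        e1 r i x ∈ wspan r c ∧ f1 r i x ∈ wspan r c ∧
        k1 r i x ∈ wspan r c ∧ k1inv r i x ∈ wspan r c := by
  have stable : ∀ T : Module.End K2 (V1 r), (∀ n ≤ r, T (wvec r c n) ∈ wspan r c) →
      ∀ x ∈ wspan r c, T x ∈ wspan r c := fun T hT _ hx =>
    Submodule.apply_mem_span_of_forall_apply_mem_span (by rintro _ ⟨n, hn, rfl⟩; exact hT n hn) hx
  intro x hx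
  refine ⟨stable _ (fun n hn => ?_) x hx,
    fun i hi hir => ⟨stable _ (fun n hn => ?_) x hx, stable _ (fun n hn => ?_) x hx,
      stable _ (fun n hn => ?_) x hx, stable _ (fun n hn => ?_) x hx⟩⟩
  · obtain ⟨μ, hμ⟩ := ht n hn
    exact hμ ▸ Submodule.smul_mem _ _ (wvec_mem_wspan hn)
  · rw [e1_wvec c hi hn]
    split_ifs
    exacts [wvec_mem_wspan (by omega), zero_mem _]
  · rw [f1_wvec c hi hir hn]
    split_ifs
    exacts [wvec_mem_wspan (by omega), zero_mem _]
  · exact (k1_wvec c hi hn) ▸ Submodule.smul_mem _ _ (wvec_mem_wspan hn)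
  · exact (k1inv_wvec c hi hn) ▸ Submodule.smul_mem _ _ (wvec_mem_wspan hn)

lemma uvq_apply_toHI {a b : ℚ} (ha : (toHI r a).1 = a) (hb : (toHI r b).1 = b) :
    uvq r a (toHI r b) = if a = b then 1 else 0 := by
  have hab : toHI r a = toHI r b ↔ a = b :=
    ⟨fun h => by rw [← ha, ← hb, h], fun h => h ▸ rfl⟩
  simp only [uvq, uv, Finsupp.single_apply, hab]

lemma apply_pos_eq_mul_apply_neg {x : V1 r} (hx : x ∈ wspan r c) {m : ℕ} (hm : m ≤ r) :
    x (toHI r ((m : ℚ) + 1/2)) = c * x (toHI r (-(m : ℚ) - 1/2)) := by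
  let φ : V1 r →ₗ[K2] K2 :=
    Finsupp.lapply (toHI r ((m : ℚ) + 1/2)) - c • Finsupp.lapply (toHI r (-(m : ℚ) - 1/2))
  have hker : wspan r c ≤ LinearMap.ker φ := by
    refine Submodule.span_le.mpr ?_
    rintro _ ⟨n, hn, rfl⟩
    simp [φ, wvec, uvq_apply_toHI (toHI_neg_val hn) (toHI_neg_val hm),
      uvq_apply_toHI (toHI_neg_val hn) (toHI_pos_val hm),
      uvq_apply_toHI (toHI_pos_val hn) (toHI_neg_val hm),
      uvq_apply_toHI (toHI_pos_val hn) (toHI_pos_val hm), -one_div]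
  simpa [φ, sub_eq_zero] using hker hx

lemma wspan_inf_eq_bot (hc : c ≠ c') : wspan r c ⊓ wspan r c' = ⊥ := by
  rw [eq_bot_iff]
  rintro x ⟨hx, hx'⟩
  have hneg : ∀ m ≤ r, x (toHI r (-(m : ℚ) - 1/2)) = 0 := by
    intro m hm
    have h : (c - c') * x (toHI r (-(m : ℚ) - 1/2)) = 0 := by
      linear_combination apply_pos_eq_mul_apply_neg hx' hm - apply_pos_eq_mul_apply_neg hx hm
    exact (mul_eq_zero.mp h).resolve_left (sub_ne_zero.mpr hc)
  rw [Submodule.mem_bot]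
  ext a
  obtain ⟨m, hm, rfl | rfl⟩ := a.exists_eq_toHI
  · exact hneg m hm
  · rw [apply_pos_eq_mul_apply_neg hx hm, hneg m hm, mul_zero, Finsupp.zero_apply]

lemma wspan_sup_eq_top (hc : c ≠ c') : wspan r c ⊔ wspan r c' = ⊤ := by
  have hcc' : c - c' ≠ 0 := sub_ne_zero.mpr hc
  rw [eq_top_iff, ← (Finsupp.basisSingleOne (R := K2) (ι := HIdx r)).span_eq, Submodule.span_le]
  rintro _ ⟨a, rfl⟩
  obtain ⟨m, hm, rfl | rfl⟩ := a.exists_eq_toHI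
  · change uvq r _ ∈ _
    have h : (c - c') • uvq r (-(m : ℚ) - 1/2) = c • wvec r c' m - c' • wvec r c m := by
      simp only [wvec, smul_add, smul_smul, sub_smul, mul_comm c' c]
      abel
    rw [← inv_smul_smul₀ hcc' (uvq r _), h]
    exact Submodule.smul_mem _ _ (Submodule.sub_mem _
      (Submodule.smul_mem _ _ (Submodule.mem_sup_right (wvec_mem_wspan hm)))
      (Submodule.smul_mem _ _ (Submodule.mem_sup_left (wvec_mem_wspan hm))))
  · change uvq r _ ∈ _
    have h : (c - c') • uvq r ((m : ℚ) + 1/2) = wvec r c m - wvec r c' m := by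
      simp only [wvec, sub_smul]
      abel
    rw [← inv_smul_smul₀ hcc' (uvq r _), h]
    exact Submodule.smul_mem _ _ (Submodule.sub_mem _
      (Submodule.mem_sup_left (wvec_mem_wspan hm)) (Submodule.mem_sup_right (wvec_mem_wspan hm)))

end Decomposition

lemma wminus_eq_wvec (r n : ℕ) : wminus r n = wvec r (-pp⁻¹) n := by
  rw [wminus, wvec, neg_smul, sub_eq_add_neg]

/-- explicit action of the coideal operators on the vectors `w_n^±`, and the
resulting decomposition `V = V⁺ ⊕ V⁻` into invariant submodules. -/
theorem coideal_action_on_w_even (r : ℕ) :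
    (∀ n : ℕ, n ≤ r →
      t1 r (wplus r n)
        = ((pp * qq ^ (if n = 0 then (1:ℤ) else 0) - pp⁻¹ * qq ^ (-(if n = 0 then (1:ℤ) else 0)))
            / (qq - qq⁻¹)) • wplus r n ∧
      t1 r (wminus r n)
        = ((pp * qq ^ (-(if n = 0 then (1:ℤ) else 0)) - pp⁻¹ * qq ^ (if n = 0 then (1:ℤ) else 0))
            / (qq - qq⁻¹)) • wminus r n) ∧
    (∀ i : ℕ, 1 ≤ i → i ≤ r → ∀ n : ℕ, n ≤ r →
      f1 r (i : ℚ) (wplus r n) = (if i = n + 1 then wplus r (n + 1) else 0) ∧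
      e1 r (i : ℚ) (wplus r n) = (if i = n then wplus r (n - 1) else 0) ∧
      f1 r (i : ℚ) (wminus r n) = (if i = n + 1 then wminus r (n + 1) else 0) ∧
      e1 r (i : ℚ) (wminus r n) = (if i = n then wminus r (n - 1) else 0)) ∧
    (∀ x ∈ Submodule.span K2 {y | ∃ n : ℕ, n ≤ r ∧ y = wplus r n},
      t1 r x ∈ Submodule.span K2 {y | ∃ n : ℕ, n ≤ r ∧ y = wplus r n} ∧
      ∀ i : ℕ, 1 ≤ i → i ≤ r →
        e1 r (i : ℚ) x ∈ Submodule.span K2 {y | ∃ n : ℕ, n ≤ r ∧ y = wplus r n} ∧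
        f1 r (i : ℚ) x ∈ Submodule.span K2 {y | ∃ n : ℕ, n ≤ r ∧ y = wplus r n} ∧
        k1 r (i : ℚ) x ∈ Submodule.span K2 {y | ∃ n : ℕ, n ≤ r ∧ y = wplus r n} ∧
        k1inv r (i : ℚ) x ∈ Submodule.span K2 {y | ∃ n : ℕ, n ≤ r ∧ y = wplus r n}) ∧
    (∀ x ∈ Submodule.span K2 {y | ∃ n : ℕ, n ≤ r ∧ y = wminus r n},
      t1 r x ∈ Submodule.span K2 {y | ∃ n : ℕ, n ≤ r ∧ y = wminus r n} ∧
      ∀ i : ℕ, 1 ≤ i → i ≤ r →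
        e1 r (i : ℚ) x ∈ Submodule.span K2 {y | ∃ n : ℕ, n ≤ r ∧ y = wminus r n} ∧
        f1 r (i : ℚ) x ∈ Submodule.span K2 {y | ∃ n : ℕ, n ≤ r ∧ y = wminus r n} ∧
        k1 r (i : ℚ) x ∈ Submodule.span K2 {y | ∃ n : ℕ, n ≤ r ∧ y = wminus r n} ∧
        k1inv r (i : ℚ) x ∈ Submodule.span K2 {y | ∃ n : ℕ, n ≤ r ∧ y = wminus r n}) ∧
    Submodule.span K2 {y | ∃ n : ℕ, n ≤ r ∧ y = wplus r n}
        ⊓ Submodule.span K2 {y | ∃ n : ℕ, n ≤ r ∧ y = wminus r n} = ⊥ ∧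
    Submodule.span K2 {y | ∃ n : ℕ, n ≤ r ∧ y = wplus r n}
        ⊔ Submodule.span K2 {y | ∃ n : ℕ, n ≤ r ∧ y = wminus r n} = ⊤ := by
  have hplus : ∀ n, wplus r n = wvec r pp n := fun _ => rfl
  simp only [hplus, wminus_eq_wvec]
  exact ⟨fun n hn => ⟨t1_wvec_pp hn, t1_wvec_neg_pp_inv hn⟩,
    fun i hi hir n hn =>
      ⟨f1_wvec _ hi hir hn, e1_wvec _ hi hn, f1_wvec _ hi hir hn, e1_wvec _ hi hn⟩,
    wspan_invariant fun n hn => ⟨_, t1_wvec_pp hn⟩,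
    wspan_invariant fun n hn => ⟨_, t1_wvec_neg_pp_inv hn⟩,
    wspan_inf_eq_bot pp_ne_neg_inv, wspan_sup_eq_top pp_ne_neg_inv⟩
end
end

section
/- There exists a function ζ : Λ → ℚ(q) with all values nonzero such that for all μ ∈ Λ and all 1 ≤ i ≤ r: ζ(μ + α_0) = −q·ζ(μ), ζ(μ + α_i) = −q^{(α_i − α_{−i}, μ + α_i)}·ζ(μ), and ζ(μ + α_{−i}) = −q^{(α_{−i}, μ + α_{−i}) − (α_i, μ)}·ζ(μ), and such that ζ(ε_{−r−1/2}) = 1. Moreover, every such ζ satisfies ζ(ε_{−i−1/2}) = (−q)^{−r+i} for all i ∈ {−r−1, −r, …, r}. -/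
/-!
The recursions are solved by `ζ(μ) = (-q)^{-ht μ} q^{E μ}` (suitably normalised), where
`ht μ = Σ ⌊a⌋ μ_a` drops by one along every `α_j`, and `E μ = Σ_{k ≥ 0} binom(s_k, 2)` with
`s_k = μ_{k+1/2} + μ_{-k-1/2}`. Indeed `α_j` changes the pair sums by `+1` at `j-1` and `-1` at `j`
(indices folded by `k ↦ -k-1`), so for `j ≠ 0` it raises `E` by `s_{j-1} - s_j + 1`, and for
`j = 0` it leaves `E` fixed: the exponents the recursions prescribe, less the `1` absorbed by `-q`.

Conversely the recursions determine the multiplier `ζ(μ + α_j) / ζ(μ)` independently of `ζ`, so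
the quotient of two solutions is constant on cosets of the root lattice; since every
`ε_{-i-1/2} - ε_{-r-1/2}` is a sum of roots, the values at the `ε`'s are forced.
-/

open scoped BigOperators

attribute [local instance] Classical.propDecidable

noncomputable section

/-- The field `ℚ(q)`. -/
abbrev Kq : Type := RatFunc ℚ

/-- The indeterminate `q`. -/
noncomputable def qv : Kq := RatFunc.X

/-- The weight lattice `Λ`, the free abelian group on the symbols `ε_a`, `a ∈ I`. -/
abbrev Lam (r : ℕ) : Type := HIdx r →₀ ℤ

/-- The symmetric bilinear form on `Λ` with `(ε_a, ε_b) = δ_{a,b}`. -/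
def bilin {r : ℕ} (x y : Lam r) : ℤ := x.sum (fun a n => n * y a)

/-- The basis element `ε_a` of `Λ` (for a rational label `a`). -/
def epsv (r : ℕ) (a : ℚ) : Lam r := Finsupp.single (toHI r a) 1

/-- The simple root `α_i = ε_{i-1/2} - ε_{i+1/2}`. -/
def alR (r : ℕ) (i : ℚ) : Lam r := epsv r (i - 1/2) - epsv r (i + 1/2)

/-- The defining conditions on the function `ζ : Λ → ℚ(q)`. -/
def zetaCond (r : ℕ) (ζ : Lam r → Kq) : Prop :=
  (∀ μ : Lam r, ζ μ ≠ 0) ∧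
  (∀ μ : Lam r, ζ (μ + alR r 0) = -qv * ζ μ) ∧
  (∀ μ : Lam r, ∀ i : ℕ, 1 ≤ i → i ≤ r →
    ζ (μ + alR r (i : ℚ))
      = -(qv ^ (bilin (alR r (i : ℚ) - alR r (-(i : ℚ))) (μ + alR r (i : ℚ)))) * ζ μ ∧
    ζ (μ + alR r (-(i : ℚ)))
      = -(qv ^ (bilin (alR r (-(i : ℚ))) (μ + alR r (-(i : ℚ))) - bilin (alR r (i : ℚ)) μ))
          * ζ μ)

lemma Ring.choose_two_add_one {R : Type*} [NonAssocRing R] [Pow R ℕ] [NatPowAssoc R]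
    [BinomialRing R] (x : R) : Ring.choose (x + 1) 2 = Ring.choose x 2 + x := by
  rw [Ring.choose_succ_succ, Ring.choose_one_right, add_comm]

lemma qv_ne_zero : qv ≠ 0 := RatFunc.X_ne_zero

section

variable {r : ℕ}

def idx (r : ℕ) (k : ℤ) : HIdx r := toHI r ((k : ℚ) + 1 / 2)

lemma idx_val {k : ℤ} (h₁ : -(r : ℤ) - 1 ≤ k) (h₂ : k ≤ r) : (idx r k).1 = k + 1 / 2 := by
  unfold idx toHI
  exact congrArg Subtype.val (dif_pos ⟨k, h₁, h₂, rfl⟩)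

lemma idx_inj {k m : ℤ} (hk₁ : -(r : ℤ) - 1 ≤ k) (hk₂ : k ≤ r) (hm₁ : -(r : ℤ) - 1 ≤ m)
    (hm₂ : m ≤ r) : idx r k = idx r m ↔ k = m := by
  refine ⟨fun h => ?_, fun h => h ▸ rfl⟩
  have h := congrArg Subtype.val h
  rw [idx_val hk₁ hk₂, idx_val hm₁ hm₂] at h
  exact_mod_cast add_right_cancel h

lemma single_idx_apply {k m : ℤ} (hk₁ : -(r : ℤ) - 1 ≤ k) (hk₂ : k ≤ r)
    (hm₁ : -(r : ℤ) - 1 ≤ m) (hm₂ : m ≤ r) (n : ℤ) :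
    Finsupp.single (idx r m) n (idx r k) = if m = k then n else 0 := by
  rw [Finsupp.single_apply]
  exact if_congr (idx_inj hm₁ hm₂ hk₁ hk₂) rfl rfl

lemma epsv_eq_single {a : ℚ} {k : ℤ} (h : a = k + 1 / 2) :
    epsv r a = Finsupp.single (idx r k) 1 := by
  subst h; rfl

lemma alR_eq (j : ℤ) :
    alR r j = Finsupp.single (idx r (j - 1)) 1 - Finsupp.single (idx r j) 1 := by
  rw [alR, epsv_eq_single (k := j - 1) (by push_cast; ring), epsv_eq_single rfl]

lemma single_idx_add_alR (k : ℤ) :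
    Finsupp.single (idx r k) 1 + alR r k = Finsupp.single (idx r (k - 1)) 1 := by
  rw [alR_eq, add_sub_cancel]

lemma alR_apply {j k : ℤ} (hj₁ : -(r : ℤ) ≤ j) (hj₂ : j ≤ r) (hk₁ : -(r : ℤ) - 1 ≤ k)
    (hk₂ : k ≤ r) : alR r j (idx r k) = (if j - 1 = k then 1 else 0) - if j = k then 1 else 0 := by
  rw [alR_eq, Finsupp.sub_apply, single_idx_apply hk₁ hk₂ (by omega) (by omega),
    single_idx_apply hk₁ hk₂ (by omega) hj₂]

lemma bilin_sub (x y ν : Lam r) : bilin (x - y) ν = bilin x ν - bilin y ν :=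
  Finsupp.sum_sub_index fun _ _ _ => sub_mul _ _ _

lemma bilin_add_right (x ν ν' : Lam r) : bilin x (ν + ν') = bilin x ν + bilin x ν' := by
  simp only [bilin, Finsupp.add_apply, mul_add, Finsupp.sum_add]

lemma bilin_single (a : HIdx r) (n : ℤ) (ν : Lam r) : bilin (Finsupp.single a n) ν = n * ν a :=
  Finsupp.sum_single_index (zero_mul _)

lemma bilin_alR (j : ℤ) (ν : Lam r) : bilin (alR r j) ν = ν (idx r (j - 1)) - ν (idx r j) := by
  rw [alR_eq, bilin_sub, bilin_single, bilin_single, one_mul, one_mul]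

lemma bilin_alR_self {j : ℤ} (hj₁ : -(r : ℤ) ≤ j) (hj₂ : j ≤ r) :
    bilin (alR r j) (alR r j) = 2 := by
  rw [bilin_alR, alR_apply hj₁ hj₂ (by omega) (by omega), alR_apply hj₁ hj₂ (by omega) hj₂]
  split_ifs <;> omega

namespace Lam

def pairSum (μ : Lam r) (k : ℤ) : ℤ := μ (idx r k) + μ (idx r (-k - 1))

lemma pairSum_neg_sub_one (μ : Lam r) (k : ℤ) : pairSum μ (-k - 1) = pairSum μ k := by
  rw [pairSum, pairSum, show -(-k - 1) - 1 = k by ring, add_comm]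

lemma pairSum_add (μ ν : Lam r) (k : ℤ) : pairSum (μ + ν) k = pairSum μ k + pairSum ν k := by
  simp only [pairSum, Finsupp.add_apply]; ring

lemma pairSum_single {k m : ℤ} (hk₁ : -(r : ℤ) - 1 ≤ k) (hk₂ : k ≤ r)
    (hm₁ : -(r : ℤ) - 1 ≤ m) (hm₂ : m ≤ r) (n : ℤ) :
    pairSum (Finsupp.single (idx r m) n) k
      = (if m = k then n else 0) + if m = -k - 1 then n else 0 := by
  rw [pairSum, single_idx_apply hk₁ hk₂ hm₁ hm₂, single_idx_apply (by omega) (by omega) hm₁ hm₂]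

lemma pairSum_alR {j k : ℤ} (hj₁ : -(r : ℤ) ≤ j) (hj₂ : j ≤ r) (hk₁ : -(r : ℤ) - 1 ≤ k)
    (hk₂ : k ≤ r) :
    pairSum (alR r j) k = (if j - 1 = k then 1 else 0) - (if j = k then 1 else 0)
      + (if j - 1 = -k - 1 then 1 else 0) - if j = -k - 1 then 1 else 0 := by
  rw [pairSum, alR_apply hj₁ hj₂ hk₁ hk₂, alR_apply hj₁ hj₂ (by omega) (by omega)]
  ring

lemma bilin_alR_sub_alR_neg (j : ℤ) (ν : Lam r) :
    bilin (alR r j - alR r (-j : ℤ)) ν = pairSum ν (j - 1) - pairSum ν j := by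
  rw [bilin_sub, bilin_alR, bilin_alR, pairSum, pairSum, show -(j - 1) - 1 = -j by ring]
  ring

def energy (μ : Lam r) : ℤ := ∑ k ∈ Finset.Icc (0 : ℤ) r, Ring.choose (pairSum μ k) 2

/-- Exactly one of `m` and `-m-1` is a nonnegative index, and only that pair sum moves. -/
lemma energy_add_single {m : ℤ} (hm₁ : -(r : ℤ) - 1 ≤ m) (hm₂ : m ≤ r) (μ : Lam r) (n : ℤ) :
    energy (μ + Finsupp.single (idx r m) n)
      = energy μ + (Ring.choose (pairSum μ m + n) 2 - Ring.choose (pairSum μ m) 2) := by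
  set m' := if 0 ≤ m then m else -m - 1 with hm'
  have hm'_mem : m' ∈ Finset.Icc (0 : ℤ) r := by
    rw [Finset.mem_Icc]; split_ifs at hm' <;> omega
  have hpair : pairSum μ m' = pairSum μ m := by
    split_ifs at hm' <;> simp only [hm', pairSum_neg_sub_one]
  have hshift : ∀ k ∈ Finset.Icc (0 : ℤ) r,
      pairSum (μ + Finsupp.single (idx r m) n) k = pairSum μ k + if k = m' then n else 0 := by
    intro k hk
    rw [Finset.mem_Icc] at hk
    rw [pairSum_add, pairSum_single (by omega) hk.2 hm₁ hm₂]
    split_ifs at hm' ⊢ <;> omega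
  have hterm : ∀ k ∈ Finset.Icc (0 : ℤ) r,
      Ring.choose (pairSum (μ + Finsupp.single (idx r m) n) k) 2
        = Ring.choose (pairSum μ k) 2
          + if k = m' then Ring.choose (pairSum μ m + n) 2 - Ring.choose (pairSum μ m) 2
            else 0 := by
    intro k hk
    rw [hshift k hk]
    split_ifs with h
    · rw [h, hpair]; ring
    · rw [add_zero, add_zero]
  rw [energy, energy, Finset.sum_congr rfl hterm, Finset.sum_add_distrib, Finset.sum_ite_eq',
    if_pos hm'_mem]

lemma energy_add_alR {j : ℤ} (hj₁ : -(r : ℤ) ≤ j) (hj₂ : j ≤ r) (μ : Lam r) :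
    energy (μ + alR r j)
      = energy μ + pairSum μ (j - 1) - pairSum μ j + 1 - if j = 0 then 1 else 0 := by
  have hsplit : μ + alR r j
      = μ + Finsupp.single (idx r (j - 1)) 1 + Finsupp.single (idx r j) (-1) := by
    rw [alR_eq, Finsupp.single_neg, add_assoc, sub_eq_add_neg]
  have hj : pairSum (Finsupp.single (idx r (j - 1)) 1) j = if j = 0 then 1 else 0 := by
    rw [pairSum_single (by omega) hj₂ (by omega) (by omega)]
    split_ifs <;> omega
  have h₁ := Ring.choose_two_add_one (pairSum μ (j - 1))
  have h₂ := Ring.choose_two_add_one (pairSum μ j + (if j = 0 then 1 else 0) + -1)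
  rw [neg_add_cancel_right] at h₂
  rw [hsplit, energy_add_single (by omega) hj₂, energy_add_single (by omega) (by omega),
    pairSum_add, hj]
  linarith

def height (μ : Lam r) : ℤ := Finsupp.linearCombination ℤ (fun a : HIdx r => ⌊a.1⌋) μ

lemma height_single {k : ℤ} (hk₁ : -(r : ℤ) - 1 ≤ k) (hk₂ : k ≤ r) :
    height (Finsupp.single (idx r k) 1) = k := by
  rw [height, Finsupp.linearCombination_single, one_smul, idx_val hk₁ hk₂, Int.floor_eq_iff]
  constructor <;> linarith

lemma height_alR {j : ℤ} (hj₁ : -(r : ℤ) ≤ j) (hj₂ : j ≤ r) : height (alR r j) = -1 := by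
  rw [alR_eq, height, map_sub, ← height, ← height, height_single (by omega) (by omega),
    height_single (by omega) hj₂]
  ring

/-- The solution of the recursions normalised at `ε_{-r-1/2}`, whose height is `-r-1`. -/
def zetaStd (r : ℕ) (μ : Lam r) : Kq := (-qv) ^ (-height μ - r - 1) * qv ^ energy μ

lemma zetaStd_ne_zero (μ : Lam r) : zetaStd r μ ≠ 0 :=
  mul_ne_zero (zpow_ne_zero _ (neg_ne_zero.mpr qv_ne_zero)) (zpow_ne_zero _ qv_ne_zero)

lemma zetaStd_add_alR {j : ℤ} (hj₁ : -(r : ℤ) ≤ j) (hj₂ : j ≤ r) (μ : Lam r) :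
    zetaStd r (μ + alR r j)
      = -qv ^ (pairSum μ (j - 1) - pairSum μ j + 2 - if j = 0 then 1 else 0) * zetaStd r μ := by
  set D := pairSum μ (j - 1) - pairSum μ j + 2 - if j = 0 then 1 else 0
  have hD : qv ^ D = qv ^ (D - 1) * qv := by rw [← zpow_add_one₀ qv_ne_zero, sub_add_cancel]
  rw [zetaStd, zetaStd, energy_add_alR hj₁ hj₂, height, map_add, ← height, ← height,
    height_alR hj₁ hj₂, show -(height μ + -1) - r - 1 = (-height μ - r - 1) + 1 by ring,
    zpow_add_one₀ (neg_ne_zero.mpr qv_ne_zero), show energy μ + pairSum μ (j - 1) - pairSum μ j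
      + 1 - (if j = 0 then 1 else 0) = energy μ + (D - 1) by ring, zpow_add₀ qv_ne_zero, hD]
  ring

lemma zetaStd_single {k : ℤ} (hk₁ : -(r : ℤ) - 1 ≤ k) (hk₂ : k ≤ r) :
    zetaStd r (Finsupp.single (idx r k) 1) = (-qv) ^ (-k - r - 1) := by
  have henergy : energy (Finsupp.single (idx r k) 1) = 0 := by
    rw [← zero_add (Finsupp.single _ _), energy_add_single hk₁ hk₂, Ring.choose_two_add_one]
    simp [energy, pairSum]
  rw [zetaStd, height_single hk₁ hk₂, henergy, zpow_zero, mul_one]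

lemma zetaCond_zetaStd (r : ℕ) : zetaCond r (zetaStd r) := by
  refine ⟨zetaStd_ne_zero, fun μ => ?_, fun μ i hi₁ hi₂ => ⟨?_, ?_⟩⟩
  · have h := zetaStd_add_alR (j := 0) (by omega) (by omega) μ
    have hpair : pairSum μ (0 - 1) = pairSum μ 0 := pairSum_neg_sub_one μ 0
    rw [hpair, if_pos rfl, Int.cast_zero] at h
    rw [h]
    norm_num
  · have h := zetaStd_add_alR (j := i) (by omega) (by omega) μ
    have hexp : bilin (alR r (i : ℤ) - alR r (-i : ℤ)) (μ + alR r (i : ℤ))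
        = pairSum μ (i - 1) - pairSum μ i + 2 - if (i : ℤ) = 0 then 1 else 0 := by
      rw [bilin_alR_sub_alR_neg, pairSum_add, pairSum_add,
        pairSum_alR (by omega) (by omega) (by omega) (by omega),
        pairSum_alR (by omega) (by omega) (by omega) (by omega)]
      split_ifs <;> omega
    push_cast at h hexp
    rw [h, hexp]
  · have h := zetaStd_add_alR (j := -i) (by omega) (by omega) μ
    have hexp : bilin (alR r (-i : ℤ)) (μ + alR r (-i : ℤ)) - bilin (alR r (i : ℤ)) μ
        = pairSum μ (-i - 1) - pairSum μ (-i) + 2 - if -(i : ℤ) = 0 then 1 else 0 := by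
      have hpair : pairSum μ (-i) = pairSum μ (i - 1) :=
        (congrArg (pairSum μ) (by ring)).trans (pairSum_neg_sub_one μ (i - 1))
      rw [bilin_add_right, bilin_alR_self (by omega) (by omega), pairSum_neg_sub_one, hpair,
        if_neg (by omega)]
      linarith [bilin_sub (alR r (i : ℤ)) (alR r (-i : ℤ)) μ, bilin_alR_sub_alR_neg (i : ℤ) μ]
    push_cast at h hexp
    rw [h, hexp]

end Lam

namespace zetaCond

variable {ζ ξ : Lam r → Kq}

/-- Two solutions of the recursions have the same multiplier at each step. -/
lemma div_add_alR (hζ : zetaCond r ζ) (hξ : zetaCond r ξ) {j : ℤ} (hj₁ : -(r : ℤ) ≤ j)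
    (hj₂ : j ≤ r) (μ : Lam r) : ζ (μ + alR r j) / ξ (μ + alR r j) = ζ μ / ξ μ := by
  rw [div_eq_div_iff (hξ.1 _) (hξ.1 _)]
  rcases lt_trichotomy j 0 with hj | rfl | hj
  · obtain ⟨i, rfl⟩ : ∃ i : ℕ, j = -i := ⟨j.natAbs, by omega⟩
    push_cast
    rw [(hζ.2.2 μ i (by omega) (by omega)).2, (hξ.2.2 μ i (by omega) (by omega)).2]
    ring
  · rw [Int.cast_zero, hζ.2.1, hξ.2.1]
    ring
  · obtain ⟨i, rfl⟩ : ∃ i : ℕ, j = i := ⟨j.natAbs, by omega⟩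
    push_cast
    rw [(hζ.2.2 μ i (by omega) (by omega)).1, (hξ.2.2 μ i (by omega) (by omega)).1]
    ring

/-- `ε_{n+1/2} - ε_{-r-1/2}` lies in the root lattice, along which the ratio is constant. -/
lemma div_single_eq (hζ : zetaCond r ζ) (hξ : zetaCond r ξ) {n : ℤ} (hn₁ : -(r : ℤ) - 1 ≤ n)
    (hn₂ : n ≤ r) :
    ζ (Finsupp.single (idx r n) 1) / ξ (Finsupp.single (idx r n) 1)
      = ζ (Finsupp.single (idx r (-r - 1)) 1) / ξ (Finsupp.single (idx r (-r - 1)) 1) := by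
  induction n, hn₁ using Int.leInduction with
  | base => rfl
  | succ n hn ih =>
    rw [← ih (by omega), ← hζ.div_add_alR hξ (j := n + 1) (by omega) hn₂, single_idx_add_alR,
      add_sub_cancel_right]

end zetaCond

end

/-- there exists a nowhere-vanishing `ζ : Λ → ℚ(q)` satisfying the recursions
with `ζ(ε_{-r-1/2}) = 1`, and every such `ζ` satisfies
`ζ(ε_{-i-1/2}) = (-q)^{-r+i}` for all `i ∈ {-r-1, …, r}`. -/
theorem zeta_exists_even (r : ℕ) :
    (∃ ζ : Lam r → Kq, zetaCond r ζ ∧ ζ (epsv r (-(r : ℚ) - 1/2)) = 1) ∧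
    (∀ ζ : Lam r → Kq, zetaCond r ζ → ζ (epsv r (-(r : ℚ) - 1/2)) = 1 →
      ∀ i : ℤ, -(r : ℤ) - 1 ≤ i → i ≤ r →
        ζ (epsv r (-(i : ℚ) - 1/2)) = (-qv) ^ (-(r : ℤ) + i)) := by
  have hbase : epsv r (-(r : ℚ) - 1/2) = Finsupp.single (idx r (-r - 1)) 1 :=
    epsv_eq_single (by push_cast; ring)
  have hstd : Lam.zetaStd r (Finsupp.single (idx r (-r - 1)) 1) = 1 := by
    rw [Lam.zetaStd_single (by omega) (by omega), show -(-(r : ℤ) - 1) - r - 1 = 0 by ring,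
      zpow_zero]
  refine ⟨⟨Lam.zetaStd r, Lam.zetaCond_zetaStd r, hbase ▸ hstd⟩, fun ζ hζ hζ₁ i hi₁ hi₂ => ?_⟩
  have h := hζ.div_single_eq (Lam.zetaCond_zetaStd r) (n := -i - 1) (by omega) (by omega)
  rw [← hbase, hζ₁, hbase, hstd, div_one, div_eq_one_iff_eq (Lam.zetaStd_ne_zero _),
    Lam.zetaStd_single (by omega) (by omega)] at h
  rw [epsv_eq_single (k := -i - 1) (by push_cast; ring), h]
  congr 1
  ring
end
end
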